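/- arXiv:1412.1222 — 4 statements merged into one kernel-verified Lean document; each statement's English description precedes it below -/
import Mathlib

section
/- Let Ω ⊆ [-1,1] be measurable, X = L²(Ω), f ∈ X with (1-t)^{-1} f(t) ∈ L²(Ω), and suppose the set {t ∈ Ω : t = -1} has measure zero. Define x_n(t) = t^n x_0(t) + (1 + t + ⋯ + t^{n-1}) f(t) for x_0 ∈ L²(Ω). Then x_n converges in L²(Ω) to the function x*(t) = (1-t)^{-1} f(t). -/
/-!
For `t ≠ 1` the geometric sum gives `x_n(t) - x*(t) = t ^ n * (x₀(t) - x*(t))`. Since `|t| < 1`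
almost everywhere on `Ω`, this tends to `0` pointwise a.e. and is dominated by `|x₀ - x*|`,
which is square integrable; dominated convergence then gives convergence in `L²`.
-/

open Filter MeasureTheory Topology ENNReal

theorem tendsto_eLpNorm_zero_of_dominated {α E F : Type*} [MeasurableSpace α] {μ : Measure α}
    [NormedAddCommGroup E] [NormedAddCommGroup F] {p : ℝ≥0∞} (hp₀ : p ≠ 0) (hp : p ≠ ∞)
    {u : ℕ → α → E} {g : α → F} (hu : ∀ n, AEStronglyMeasurable (u n) μ) (hg : MemLp g p μ)
    (h_bound : ∀ n, ∀ᵐ x ∂μ, ‖u n x‖ ≤ ‖g x‖)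
    (h_lim : ∀ᵐ x ∂μ, Tendsto (fun n => u n x) atTop (𝓝 0)) :
    Tendsto (fun n => eLpNorm (u n) p μ) atTop (𝓝 0) := by
  have hp_pos : 0 < p.toReal := ENNReal.toReal_pos hp₀ hp
  have h_int : Tendsto (fun n => ∫⁻ x, ‖u n x‖ₑ ^ p.toReal ∂μ) atTop (𝓝 0) := by
    have h_lim' : ∀ᵐ x ∂μ, Tendsto (fun n => ‖u n x‖ₑ ^ p.toReal) atTop (𝓝 0) :=
      h_lim.mono fun x hx => by
        simpa [hp_pos, Function.comp_def] using
          ((ENNReal.continuous_rpow_const (y := p.toReal)).tendsto _).comp hx.enorm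
    simpa using tendsto_lintegral_of_dominated_convergence' (fun x => ‖g x‖ₑ ^ p.toReal)
      (fun n => (hu n).enorm.pow_const _)
      (fun n => (h_bound n).mono fun x hx =>
        ENNReal.rpow_le_rpow (enorm_le_iff_norm_le.mpr hx) hp_pos.le)
      (lintegral_rpow_enorm_lt_top_of_eLpNorm_lt_top hp₀ hp hg.2).ne h_lim'
  simp_rw [eLpNorm_eq_lintegral_rpow_enorm_toReal hp₀ hp]
  simpa [hp_pos, Function.comp_def] using
    ((ENNReal.continuous_rpow_const (y := 1 / p.toReal)).tendsto 0).comp h_int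

theorem pow_mul_add_geom_sum_mul_sub_inv_mul {K : Type*} [Field K] {t : K} (ht : t ≠ 1)
    (x y : K) (n : ℕ) :
    t ^ n * x + (∑ i ∈ Finset.range n, t ^ i) * y - (1 - t)⁻¹ * y
      = t ^ n * (x - (1 - t)⁻¹ * y) := by
  have h : 1 - t ≠ 0 := sub_ne_zero.mpr ht.symm
  rw [geom_sum_eq ht]
  field_simp
  ring

theorem ae_restrict_abs_lt_one {Ω : Set ℝ} (hΩ : Ω ⊆ Set.Icc (-1) 1) :
    ∀ᵐ t ∂volume.restrict Ω, |t| < 1 := by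
  refine ae_restrict_of_ae_restrict_of_subset hΩ ?_
  rw [Measure.restrict_congr_set Ioo_ae_eq_Icc.symm]
  exact (ae_restrict_mem measurableSet_Ioo).mono fun t ht => abs_lt.mpr ht

theorem tendsto_eLpNorm_pow_mul_zero {μ : Measure ℝ} {p : ℝ≥0∞} (hp₀ : p ≠ 0) (hp : p ≠ ∞)
    {d : ℝ → ℝ} (hd : MemLp d p μ) (hμ : ∀ᵐ t ∂μ, |t| < 1) :
    Tendsto (fun n : ℕ => eLpNorm (fun t => t ^ n * d t) p μ) atTop (𝓝 0) := by
  refine tendsto_eLpNorm_zero_of_dominated hp₀ hp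
    (fun n => (continuous_pow n).aestronglyMeasurable.mul hd.1) hd (fun n => ?_) ?_
  · filter_upwards [hμ] with t ht
    rw [norm_mul, norm_pow]
    exact mul_le_of_le_one_left (norm_nonneg _) (pow_le_one₀ (norm_nonneg t) ht.le)
  · filter_upwards [hμ] with t ht
    simpa using (tendsto_pow_atTop_nhds_zero_of_abs_lt_one ht).mul_const (d t)

theorem stmt8_general (Ω : Set ℝ) (hsub : Ω ⊆ Set.Icc (-1 : ℝ) 1)
    (f x₀ : ℝ → ℝ)
    (hx₀ : MemLp x₀ 2 (volume.restrict Ω))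
    (hstar : MemLp (fun t => (1 - t)⁻¹ * f t) 2 (volume.restrict Ω)) :
    Tendsto
      (fun n : ℕ =>
        eLpNorm
          (fun t : ℝ =>
            (t ^ n * x₀ t + (∑ i ∈ Finset.range n, t ^ i) * f t) - (1 - t)⁻¹ * f t)
          2 (volume.restrict Ω))
      atTop (nhds 0) := by
  have hμ := ae_restrict_abs_lt_one hsub
  refine (tendsto_eLpNorm_pow_mul_zero two_ne_zero ofNat_ne_top (hx₀.sub hstar) hμ).congr
    fun n => eLpNorm_congr_ae ?_
  filter_upwards [hμ] with t ht
  exact (pow_mul_add_geom_sum_mul_sub_inv_mul (lt_of_abs_lt ht).ne _ _ n).symm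

theorem stmt8 (Ω : Set ℝ) (hΩ : MeasurableSet Ω) (hsub : Ω ⊆ Set.Icc (-1 : ℝ) 1)
    (f x₀ : ℝ → ℝ)
    (hf : MemLp f 2 (volume.restrict Ω))
    (hx₀ : MemLp x₀ 2 (volume.restrict Ω))
    (hstar : MemLp (fun t => (1 - t)⁻¹ * f t) 2 (volume.restrict Ω))
    (hneg : (volume.restrict Ω) {(-1 : ℝ)} = 0) :
    Tendsto
      (fun n : ℕ =>
        eLpNorm
          (fun t : ℝ =>
            (t ^ n * x₀ t + (∑ i ∈ Finset.range n, t ^ i) * f t) - (1 - t)⁻¹ * f t)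
          2 (volume.restrict Ω))
      atTop (nhds 0) :=
  stmt8_general Ω hsub f x₀ hx₀ hstar
end

section
/- Let α > 0 and k a positive integer. For all λ ≥ 0, |1/(1 + αλ^k)| ≤ 1, and for s > 0 and n > s/k, max_{λ ≥ 0} λ^s (1 + αλ^k)^{-n} = (s/(α(nk - s)))^{s/k} ((nk - s)/(nk))^n. -/
/-!
Substituting `t = α λ^k` turns `λ^s (1 + α λ^k)^(-n)` into `α^(-s/k) · t^a (1 + t)^(-n)` with
`a = s/k < n`, and `λ ↦ α λ^k` maps `[0, ∞)` onto itself. The maximum of `t^a (1 + t)^(-N)` over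
`t ≥ 0` comes from weighted AM-GM with weights `a/N` and `(N - a)/N` at the points `t (N - a)/a`
and `1`: their arithmetic mean is `(N - a)/N · (1 + t)`, and equality holds at `t = a/(N - a)`.
-/

open Real Set

lemma rpow_div_one_add_rpow_le {a N t : ℝ} (ha : 0 < a) (haN : a < N) (ht : 0 ≤ t) :
    t ^ a / (1 + t) ^ N ≤ (a / (N - a)) ^ a * ((N - a) / N) ^ N := by
  have hN : 0 < N := ha.trans haN
  have hNa : 0 < N - a := sub_pos.2 haN
  set t₀ := a / (N - a)
  have ht₀ : 0 < t₀ := div_pos ha hNa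
  have hx : 0 ≤ t / t₀ := div_nonneg ht ht₀.le
  have amgm : (t / t₀) ^ (a / N) ≤ (N - a) / N * (1 + t) := by
    have := geom_mean_le_arith_mean2_weighted (div_nonneg ha.le hN.le)
      (div_nonneg hNa.le hN.le) hx zero_le_one (by field_simp; ring)
    rw [one_rpow, mul_one] at this
    convert this using 1
    simp only [t₀]
    field_simp
    ring
  have hpow : (t / t₀) ^ a ≤ ((N - a) / N) ^ N * (1 + t) ^ N := by
    have := rpow_le_rpow (rpow_nonneg hx _) amgm hN.le
    rwa [← rpow_mul hx, div_mul_cancel₀ _ hN.ne',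
      mul_rpow (by positivity) (by positivity)] at this
  rw [div_rpow ht ht₀.le, div_le_iff₀ (rpow_pos_of_pos ht₀ a)] at hpow
  rw [div_le_iff₀ (by positivity)]
  linarith

theorem isGreatest_rpow_div_one_add_rpow {a N : ℝ} (ha : 0 < a) (haN : a < N) :
    IsGreatest ((fun t : ℝ => t ^ a / (1 + t) ^ N) '' Ici 0)
      ((a / (N - a)) ^ a * ((N - a) / N) ^ N) := by
  have hNa : 0 < N - a := sub_pos.2 haN
  refine ⟨⟨a / (N - a), mem_Ici.2 (div_pos ha hNa).le, ?_⟩, ?_⟩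
  · have h : 1 + a / (N - a) = ((N - a) / N)⁻¹ := by
      field_simp
      ring
    simp only [h, inv_rpow (div_pos hNa (ha.trans haN)).le, div_inv_eq_mul]
  · rintro _ ⟨t, ht, rfl⟩
    exact rpow_div_one_add_rpow_le ha haN ht

lemma image_const_mul_pow_Ici_zero {α : ℝ} (hα : 0 < α) {k : ℕ} (hk : k ≠ 0) :
    (fun l : ℝ => α * l ^ k) '' Ici 0 = Ici 0 := by
  ext t
  constructor
  · rintro ⟨l, hl, rfl⟩
    exact mem_Ici.2 (mul_nonneg hα.le (pow_nonneg hl _))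
  · intro ht
    have htα : 0 ≤ t / α := div_nonneg ht hα.le
    refine ⟨(t / α) ^ (k : ℝ)⁻¹, mem_Ici.2 (rpow_nonneg htα _), ?_⟩
    show α * _ ^ k = t
    rw [rpow_inv_natCast_pow htα hk, mul_div_cancel₀ _ hα.ne']

lemma rpow_eq_mul_pow_rpow_div_rpow {α l : ℝ} (hα : 0 < α) (hl : 0 ≤ l) {k : ℕ}
    (hk : k ≠ 0) (s : ℝ) : l ^ s = (α * l ^ k) ^ (s / k) / α ^ (s / k) := by
  rw [mul_rpow hα.le (by positivity), ← rpow_natCast, ← rpow_mul hl,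
    mul_div_cancel₀ _ (Nat.cast_ne_zero.2 hk),
    mul_div_cancel_left₀ _ (rpow_pos_of_pos hα _).ne']

theorem stmt15 (α : ℝ) (hα : 0 < α) (k : ℕ) (hk : 0 < k) (s : ℝ) (hs : 0 < s)
    (n : ℕ) (hn : s / k < n) :
    (∀ l : ℝ, 0 ≤ l → |1 / (1 + α * l ^ k)| ≤ 1) ∧
    IsGreatest ((fun l : ℝ => l ^ s / (1 + α * l ^ k) ^ n) '' Set.Ici 0)
      ((s / (α * ((n : ℝ) * k - s))) ^ (s / k) *
        (((n : ℝ) * k - s) / ((n : ℝ) * k)) ^ n) := by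
  have hkR : (0 : ℝ) < k := Nat.cast_pos.2 hk
  set a := s / k
  have ha : 0 < a := div_pos hs hkR
  have hαa : 0 < α ^ a := rpow_pos_of_pos hα a
  refine ⟨fun l hl => ?_, ?_⟩
  · rw [abs_of_nonneg (by positivity), div_le_one (by positivity)]
    exact le_add_of_nonneg_right (by positivity)
  have hvalue : (s / (α * ((n : ℝ) * k - s))) ^ a * (((n : ℝ) * k - s) / ((n : ℝ) * k)) ^ n =
      (a / (n - a)) ^ a * ((n - a) / n) ^ (n : ℝ) / α ^ a := by
    have hnk : (0 : ℝ) < n * k - s := by linarith [(div_lt_iff₀ hkR).1 hn]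
    have h₁ : s / (α * ((n : ℝ) * k - s)) = a / (n - a) / α := by simp only [a]; field_simp
    have h₂ : ((n : ℝ) * k - s) / ((n : ℝ) * k) = (n - a) / n := by simp only [a]; field_simp
    rw [h₁, h₂, div_rpow (by positivity) hα.le, rpow_natCast]
    ring
  have hmono : Monotone (fun y : ℝ => y / α ^ a) := fun _ _ h =>
    div_le_div_of_nonneg_right h hαa.le
  have hmax := hmono.map_isGreatest (isGreatest_rpow_div_one_add_rpow ha hn)
  rw [← image_const_mul_pow_Ici_zero hα hk.ne', image_image, image_image] at hmax
  have hsubst : ∀ l ∈ Ici (0 : ℝ), l ^ s / (1 + α * l ^ k) ^ n =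
      (α * l ^ k) ^ a / (1 + α * l ^ k) ^ (n : ℝ) / α ^ a := fun l hl => by
    rw [rpow_eq_mul_pow_rpow_div_rpow hα hl hk.ne', rpow_natCast, div_right_comm]
  rwa [hvalue, image_congr hsubst]
end

section
/- Let B be a bounded self-adjoint operator on a complex Hilbert space X with ‖B‖ ≤ 1 such that -1 is not an eigenvalue of B. Suppose the equation x = Bx + f has a solution x* ∈ X. Then for any x_0 ∈ X, the successive approximations x_{n+1} = B x_n + f converge in norm to a solution of x = Bx + f; specifically, they converge to the solution x̂ determined by P x̂ = P x_0, where P is the orthogonal projection onto the eigenspace ker(B - I). -/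
/-!
Since `x̂` is a fixed point of `x ↦ B x + f`, we have `x n - x̂ = Bⁿ (x 0 - x̂)` with
`x 0 - x̂ ⊥ ker (B - 1)`, so it suffices that `Bⁿ v → 0` for every `v ⊥ ker (B - 1)`.
This replaces the spectral theorem by an elementary argument. The norms `‖Bⁿ v‖` decrease,
and by self-adjointness
`‖B²ᵐ v - B²ⁿ v‖² = ‖B²ᵐ v‖² - 2 ‖Bᵐ⁺ⁿ v‖² + ‖B²ⁿ v‖²`, so the even iterates form a Cauchy
sequence. Its limit `w` is fixed by `B²`, hence by `B` because `-1` is not an eigenvalue.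
Then `⟪B²ⁿ v, w⟫ = ⟪v, w⟫ = 0`, which in the limit gives `⟪w, w⟫ = 0`.
-/

open Filter Topology

lemma ContinuousLinearMap.antitone_norm_pow_apply {𝕜 E : Type*} [NontriviallyNormedField 𝕜]
    [SeminormedAddCommGroup E] [NormedSpace 𝕜 E] {T : E →L[𝕜] E} (hT1 : ‖T‖ ≤ 1) (v : E) :
    Antitone fun n ↦ ‖(T ^ n) v‖ :=
  antitone_nat_of_succ_le fun n ↦ by
    simpa only [pow_succ', mul_apply_eq_comp, one_mul] using T.le_of_opNorm_le hT1 ((T ^ n) v)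

lemma sub_eq_pow_apply_of_recurrence {R M : Type*} [Semiring R] [TopologicalSpace M]
    [AddCommGroup M] [Module R M] {B : M →L[R] M} {f xhat : M} {x : ℕ → M}
    (hxhat : xhat = B xhat + f) (hx : ∀ n, x (n + 1) = B (x n) + f) (n : ℕ) :
    x n - xhat = (B ^ n) (x 0 - xhat) := by
  induction n with
  | zero => simp
  | succ n ih =>
    rw [hx, pow_succ', mul_apply_eq_comp, ← ih, map_sub]
    conv_lhs => rw [hxhat]
    abel

namespace IsSelfAdjoint

variable {𝕜 E : Type*} [RCLike 𝕜] [NormedAddCommGroup E] [InnerProductSpace 𝕜 E] [CompleteSpace E]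
  {T : E →L[𝕜] E}

local notation "⟪" x ", " y "⟫" => inner 𝕜 x y

lemma inner_pow_apply_left (hT : IsSelfAdjoint T) (i : ℕ) (v w : E) :
    ⟪(T ^ i) v, w⟫ = ⟪v, (T ^ i) w⟫ :=
  (hT.pow i).isSymmetric v w

lemma norm_pow_apply_sub_pow_apply_sq (hT : IsSelfAdjoint T) (v : E) (m n : ℕ) :
    ‖(T ^ (2 * m)) v - (T ^ (2 * n)) v‖ ^ 2 =
      ‖(T ^ (2 * m)) v‖ ^ 2 - 2 * ‖(T ^ (m + n)) v‖ ^ 2 + ‖(T ^ (2 * n)) v‖ ^ 2 := by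
  have hinner : ⟪(T ^ (2 * m)) v, (T ^ (2 * n)) v⟫ = ⟪(T ^ (m + n)) v, (T ^ (m + n)) v⟫ := by
    rw [hT.inner_pow_apply_left, hT.inner_pow_apply_left, ← mul_apply_eq_comp, ← mul_apply_eq_comp,
      ← pow_add, ← pow_add]
    ring_nf
  rw [norm_sub_sq (𝕜 := 𝕜), hinner, inner_self_eq_norm_sq]

lemma cauchySeq_pow_two_mul_apply (hT : IsSelfAdjoint T) (hT1 : ‖T‖ ≤ 1) (v : E) :
    CauchySeq fun n ↦ (T ^ (2 * n)) v := by
  set a : ℕ → ℝ := fun n ↦ ‖(T ^ n) v‖ ^ 2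
  have ha : Antitone a := fun m n hmn ↦
    pow_le_pow_left₀ (norm_nonneg _) (T.antitone_norm_pow_apply hT1 v hmn) 2
  have hlim : Tendsto a atTop (𝓝 (⨅ n, a n)) :=
    tendsto_atTop_ciInf ha ⟨0, by rintro _ ⟨n, rfl⟩; positivity⟩
  rw [Metric.cauchySeq_iff']
  intro ε hε
  obtain ⟨N, hN⟩ := (hlim.eventually (gt_mem_nhds (lt_add_of_pos_right _ (pow_pos hε 2)))).exists
  refine ⟨N, fun n hn ↦ ?_⟩
  have hsq : ‖(T ^ (2 * n)) v - (T ^ (2 * N)) v‖ ^ 2 < ε ^ 2 := by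
    rw [hT.norm_pow_apply_sub_pow_apply_sq]
    have h1 : a (2 * n) ≤ a (n + N) := ha (by omega)
    have h2 : a (2 * N) ≤ a N := ha (by omega)
    have h3 : ⨅ k, a k ≤ a (n + N) := ciInf_le ⟨0, by rintro _ ⟨k, rfl⟩; positivity⟩ _
    simp only [a] at *
    linarith
  rw [dist_eq_norm]
  exact lt_of_pow_lt_pow_left₀ 2 hε.le hsq

lemma tendsto_pow_two_mul_apply_zero (hT : IsSelfAdjoint T) (hT1 : ‖T‖ ≤ 1)
    (hneg : ∀ z, T z = -z → z = 0) {v : E} (hv : v ∈ (T - 1).kerᗮ) :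
    Tendsto (fun n ↦ (T ^ (2 * n)) v) atTop (𝓝 0) := by
  obtain ⟨w, hw⟩ := cauchySeq_tendsto_of_complete (hT.cauchySeq_pow_two_mul_apply hT1 v)
  have hT2w : (T ^ 2) w = w := by
    refine isFixedPt_of_tendsto_iterate (x := v) ?_ (T ^ 2).continuous.continuousAt
    simpa only [← FunLike.coe_pow_eq_iterate, ← pow_mul] using hw
  have hTw : T w = w := by
    refine sub_eq_zero.1 (hneg _ ?_)
    rw [map_sub, ← mul_apply_eq_comp, ← sq, hT2w, neg_sub]
  have hwK : w ∈ (T - 1).ker := by simp [hTw]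
  have horth : ∀ n, ⟪(T ^ (2 * n)) v, w⟫ = 0 := fun n ↦ by
    rw [hT.inner_pow_apply_left, pow_apply_eq_iterate, Function.iterate_fixed hTw]
    exact Submodule.inner_left_of_mem_orthogonal hwK hv
  have hww : ⟪w, w⟫ = 0 :=
    tendsto_nhds_unique (hw.inner tendsto_const_nhds) (by simp only [horth, tendsto_const_nhds])
  rwa [inner_self_eq_zero.1 hww] at hw

lemma tendsto_pow_apply_zero (hT : IsSelfAdjoint T) (hT1 : ‖T‖ ≤ 1)
    (hneg : ∀ z, T z = -z → z = 0) {v : E} (hv : v ∈ (T - 1).kerᗮ) :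
    Tendsto (fun n ↦ (T ^ n) v) atTop (𝓝 0) := by
  rw [tendsto_zero_iff_norm_tendsto_zero, tendsto_iff_tendsto_subseq_of_antitone
    (T.antitone_norm_pow_apply hT1 v) (tendsto_id.const_mul_atTop' two_pos)]
  simpa only [norm_zero, Function.comp_def, id_eq] using
    (hT.tendsto_pow_two_mul_apply_zero hT1 hneg hv).norm

end IsSelfAdjoint

theorem stmt17 {X : Type*} [NormedAddCommGroup X] [InnerProductSpace ℂ X] [CompleteSpace X]
    (B : X →L[ℂ] X) (hB : IsSelfAdjoint B) (hnorm : ‖B‖ ≤ 1)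
    (hm1 : ∀ z : X, B z = -z → z = 0)
    (f xstar : X) (hsol : xstar = B xstar + f)
    (x : ℕ → X) (hrec : ∀ n, x (n + 1) = B (x n) + f) :
    ∃ xhat : X, xhat = B xhat + f ∧
      (∀ z : X, B z = z → (inner ℂ (x 0 - xhat) z : ℂ) = 0) ∧
      Tendsto x atTop (nhds xhat) := by
  set K := (B - 1).ker
  set u := K.starProjection (x 0 - xstar)
  have hBu : B u = u := sub_eq_zero.1 (K.starProjection_apply_mem (x 0 - xstar))
  have hfix : xstar + u = B (xstar + u) + f := by
    rw [map_add, hBu]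
    conv_lhs => rw [hsol]
    abel
  have horth : x 0 - (xstar + u) ∈ Kᗮ := by
    rw [sub_add_eq_sub_sub]
    exact K.sub_starProjection_mem_orthogonal _
  refine ⟨xstar + u, hfix,
    fun z hz ↦ Submodule.inner_left_of_mem_orthogonal (by simp [K, hz]) horth, ?_⟩
  rw [← tendsto_sub_nhds_zero_iff]
  exact (hB.tendsto_pow_apply_zero hnorm hm1 horth).congr fun n ↦
    (sub_eq_pow_apply_of_recurrence hfix hrec n).symm
end

section
/- Let B be a bounded self-adjoint operator on a complex Hilbert space X with ‖B‖ ≤ 1, and let π be a continuous real function on [-1,1] with π(1) = π(-1) = 0. Suppose x* solves x = Bx + f. Then for any x_0 ∈ X the iterates x_{n+1} = B x_n + f satisfy ‖π(B)(x_n − x*)‖ ≤ γ_n ‖x_0 − x*‖ with γ_n = max_{λ ∈ [-1,1]} |π(λ)| |λ|^n → 0; in particular x_n → x* in the weakened norm ‖x‖_π = ‖π(B)x‖, uniformly for x_0 − x* in any bounded set. -/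
/-!
The error `eₙ = xₙ - x*` satisfies `eₙ = Bⁿ e₀`, so `π(B) eₙ = (π · idⁿ)(B) e₀`, and the isometric
functional calculus bounds the norm of `(π · idⁿ)(B)` by the supremum of `|π λ| |λ|ⁿ` over
`Sp B ⊆ [-1, 1]`. These functions decrease in `n` and tend to `0` pointwise on `[-1, 1]`
(at `λ = ±1` because `π` vanishes there), so by Dini's theorem they do so uniformly.
-/

open Filter Topology Set

theorem tendsto_sSup_image_of_tendstoUniformlyOn_zero {ι α : Type*} {l : Filter ι}
    {F : ι → α → ℝ} {s : Set α} (hF : ∀ i, ∀ x ∈ s, 0 ≤ F i x)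
    (h : TendstoUniformlyOn F 0 l s) :
    Tendsto (fun i => sSup (F i '' s)) l (𝓝 0) := by
  rw [Metric.tendsto_nhds]
  intro ε hε
  filter_upwards [Metric.tendstoUniformlyOn_iff.mp h (ε / 2) (half_pos hε)] with i hi
  have hsup : sSup (F i '' s) ≤ ε / 2 := by
    refine Real.sSup_le (forall_mem_image.2 fun x hx => ?_) (half_pos hε).le
    simpa [Real.dist_eq, abs_of_nonneg (hF i x hx)] using (hi x hx).le
  have hnonneg : 0 ≤ sSup (F i '' s) := Real.sSup_nonneg (forall_mem_image.2 (hF i))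
  rw [Real.dist_eq, sub_zero, abs_of_nonneg hnonneg]
  linarith

theorem tendstoUniformlyOn_abs_mul_abs_pow_zero {π : ℝ → ℝ}
    (hπ : ContinuousOn π (Icc (-1) 1)) (hπ1 : π 1 = 0) (hπm1 : π (-1) = 0) :
    TendstoUniformlyOn (fun (n : ℕ) (l : ℝ) => |π l| * |l| ^ n) 0 atTop (Icc (-1) 1) := by
  refine Antitone.tendstoUniformlyOn_of_forall_tendsto isCompact_Icc
    (fun n => hπ.abs.mul (continuous_abs.pow n).continuousOn) (fun l hl => ?_)
    continuousOn_const (fun l hl => ?_)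
  · have habs : |l| ≤ 1 := abs_le.mpr hl
    exact fun m n hmn => mul_le_mul_of_nonneg_left
      (pow_le_pow_of_le_one (abs_nonneg l) habs hmn) (abs_nonneg _)
  · rcases (abs_le.mpr hl).lt_or_eq with hlt | heq
    · simpa using (tendsto_pow_atTop_nhds_zero_of_lt_one (abs_nonneg l) hlt).const_mul |π l|
    · have : π l = 0 := by
        rcases abs_eq (zero_le_one' ℝ) |>.mp heq with rfl | rfl <;> assumption
      simp [this]

theorem spectrum_subset_Icc_of_norm_le_one {A : Type*} [CStarAlgebra A] {a : A} (ha : ‖a‖ ≤ 1) :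
    spectrum ℝ a ⊆ Icc (-1) 1 := by
  nontriviality A
  intro l hl
  exact abs_le.mp ((spectrum.norm_le_norm_of_mem hl).trans ha)

theorem norm_cfc_le_sSup_image_norm {𝕜 A : Type*} {p : outParam (A → Prop)}
    [RCLike 𝕜] [NormedRing A] [StarRing A] [NormedAlgebra 𝕜 A]
    [IsometricContinuousFunctionalCalculus 𝕜 A p] {a : A} {s : Set 𝕜} (hs : IsCompact s)
    (hspec : spectrum 𝕜 a ⊆ s) {g : 𝕜 → 𝕜} (hg : ContinuousOn g s) :
    ‖cfc g a‖ ≤ sSup ((fun l => ‖g l‖) '' s) := by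
  have hbdd : BddAbove ((fun l => ‖g l‖) '' s) := (hs.image_of_continuousOn hg.norm).bddAbove
  exact norm_cfc_le (Real.sSup_nonneg (forall_mem_image.2 fun _ _ => norm_nonneg _))
    fun l hl => le_csSup hbdd ⟨l, hspec hl, rfl⟩

theorem norm_cfc_mul_pow_le {A : Type*} [CStarAlgebra A] {a : A} (ha : IsSelfAdjoint a)
    {s : Set ℝ} (hs : IsCompact s) (hspec : spectrum ℝ a ⊆ s) {π : ℝ → ℝ}
    (hπ : ContinuousOn π s) (n : ℕ) :
    ‖cfc π a * a ^ n‖ ≤ sSup ((fun l => |π l| * |l| ^ n) '' s) := by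
  rw [← cfc_pow_id (R := ℝ) a n, ← cfc_mul π _ a (hπ.mono hspec)]
  simpa only [Real.norm_eq_abs, abs_mul, abs_pow] using
    norm_cfc_le_sSup_image_norm (g := fun l => π l * l ^ n) hs hspec
      (hπ.mul (continuousOn_id.pow n))

theorem sub_eq_pow_apply_sub_of_recurrence {R M : Type*} [Semiring R] [AddCommGroup M]
    [Module R M] [TopologicalSpace M] (B : M →L[R] M) {f xstar : M} (hsol : xstar = B xstar + f)
    {x : ℕ → M} (hrec : ∀ n, x (n + 1) = B (x n) + f) (n : ℕ) :
    x n - xstar = (B ^ n) (x 0 - xstar) := by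
  induction n with
  | zero => simp
  | succ n ih =>
    rw [hrec, pow_succ', mul_apply_eq_comp, ← ih, map_sub]
    conv_lhs => rw [hsol]
    abel

theorem stmt19 {X : Type*} [NormedAddCommGroup X] [InnerProductSpace ℂ X] [CompleteSpace X]
    (B : X →L[ℂ] X) (hB : IsSelfAdjoint B) (hnorm : ‖B‖ ≤ 1)
    (π : ℝ → ℝ) (hπ : ContinuousOn π (Set.Icc (-1 : ℝ) 1))
    (hπ1 : π 1 = 0) (hπm1 : π (-1) = 0)
    (f xstar : X) (hsol : xstar = B xstar + f)
    (x : ℕ → X) (hrec : ∀ n, x (n + 1) = B (x n) + f) :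
    Tendsto (fun n : ℕ => sSup ((fun l : ℝ => |π l| * |l| ^ n) '' Set.Icc (-1 : ℝ) 1))
        atTop (nhds 0) ∧
    ∀ n : ℕ,
      ‖cfc π B (x n - xstar)‖ ≤
        sSup ((fun l : ℝ => |π l| * |l| ^ n) '' Set.Icc (-1 : ℝ) 1) * ‖x 0 - xstar‖ := by
  refine ⟨tendsto_sSup_image_of_tendstoUniformlyOn_zero (fun _ _ _ => by positivity)
    (tendstoUniformlyOn_abs_mul_abs_pow_zero hπ hπ1 hπm1), fun n => ?_⟩
  rw [sub_eq_pow_apply_sub_of_recurrence B hsol hrec, ← mul_apply_eq_comp]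
  calc ‖(cfc π B * B ^ n) (x 0 - xstar)‖ ≤ ‖cfc π B * B ^ n‖ * ‖x 0 - xstar‖ :=
        (cfc π B * B ^ n).le_opNorm _
    _ ≤ _ := by
        gcongr
        exact norm_cfc_mul_pow_le hB isCompact_Icc (spectrum_subset_Icc_of_norm_le_one hnorm) hπ n
end
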